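/- arXiv:2508.11064 — 2 statements merged into one kernel-verified Lean document; each statement's English description precedes it below -/
import Mathlib

section
/- Let $a, b > 0$ and $p > 1$. Suppose there exists $x > 0$ with $a - x + b x^p < 0$, and let $x_0$ be the smallest positive zero of $f(x) = a - x + b x^p$. Let $I \subseteq \mathbb{R}$ be an interval and $\phi : I \to [0,\infty)$ a continuous function satisfying $\phi(t) \le a + b\,\phi(t)^p$ for all $t \in I$. If $\phi(t_0) \le x_0$ for some $t_0 \in I$, then $\phi(t) \le x_0$ for all $t \in I$. -/
/-!
The function `f x = a - x + b x ^ p` is convex on `[0, ∞)` with `f 0 > 0`, so if `x₁ > 0` has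
`f x₁ < 0` and `x₀` is the first positive zero, then `x₀ < x₁` and `f < 0` on `(x₀, x₁]`.
The hypothesis on `φ` says `f (φ t) ≥ 0`, so `φ` never takes values in `(x₀, x₁]`; by the
intermediate value theorem a continuous `φ` on a connected set then cannot cross from
`(-∞, x₀]` to `(x₀, ∞)`.
-/

open Set

theorem ConvexOn.lt_left_of_mem_Ioc {s : Set ℝ} {f : ℝ → ℝ} (hf : ConvexOn ℝ s f)
    {x₀ x₁ y : ℝ} (hx₀ : x₀ ∈ s) (hx₁ : x₁ ∈ s) (h : f x₁ < f x₀) (hy : y ∈ Ioc x₀ x₁) :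
    f y < f x₀ := by
  rcases hy.2.eq_or_lt with rfl | hyx₁
  · exact h
  · have hseg : y ∈ openSegment ℝ x₀ x₁ := by
      rw [openSegment_eq_Ioo (hy.1.trans hyx₁)]
      exact ⟨hy.1, hyx₁⟩
    by_contra! hle
    exact (hf.le_right_of_left_le hx₀ hx₁ hseg hle).not_gt (h.trans_le hle)

theorem le_of_pos_of_forall_ne_zero {f : ℝ → ℝ} {a x x₀ : ℝ} (hax : a ≤ x)
    (hf : ContinuousOn f (Icc a x)) (ha : 0 < f a) (hx : f x < 0)
    (hzero : ∀ y ∈ Ioo a x₀, f y ≠ 0) : x₀ ≤ x := by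
  by_contra! hxx₀
  obtain ⟨z, hz, hfz⟩ := intermediate_value_Ioo' hax hf ⟨hx, ha⟩
  exact hzero z ⟨hz.1, hz.2.trans hxx₀⟩ hfz

theorem IsPreconnected.forall_le_of_forall_notMem_Ioc {X : Type*} [TopologicalSpace X]
    {s : Set X} (hs : IsPreconnected s) {φ : X → ℝ} (hφ : ContinuousOn φ s) {x₀ x₁ : ℝ}
    (hx₀x₁ : x₀ < x₁) (hgap : ∀ t ∈ s, φ t ∉ Ioc x₀ x₁) {t₀ : X} (ht₀ : t₀ ∈ s)
    (hφt₀ : φ t₀ ≤ x₀) : ∀ t ∈ s, φ t ≤ x₀ := by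
  intro t ht
  by_contra! hφt
  obtain ⟨u, hu, hφu⟩ := hs.intermediate_value ht₀ ht hφ
    (show min (φ t) x₁ ∈ Icc (φ t₀) (φ t) from
      ⟨hφt₀.trans (le_min hφt.le hx₀x₁.le), min_le_left _ _⟩)
  exact hgap u hu (hφu ▸ ⟨lt_min hφt hx₀x₁, min_le_right _ _⟩)

theorem convexOn_sub_add_mul_rpow (a : ℝ) {b p : ℝ} (hb : 0 ≤ b) (hp : 1 ≤ p) :
    ConvexOn ℝ (Ici 0) fun x : ℝ ↦ a - x + b * x ^ p :=
  ((convexOn_const a (convex_Ici 0)).sub (concaveOn_id (convex_Ici 0))).add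
    ((convexOn_rpow hp).smul hb)

theorem continuous_sub_add_mul_rpow (a b : ℝ) {p : ℝ} (hp : 0 ≤ p) :
    Continuous fun x : ℝ ↦ a - x + b * x ^ p := by
  have := Real.continuous_rpow_const hp
  fun_prop

theorem stmt_0_general (a b p : ℝ) (ha : 0 < a) (hb : 0 < b) (hp : 1 < p)
    (f : ℝ → ℝ) (hf : ∀ x, f x = a - x + b * x ^ p)
    (hneg : ∃ x > 0, f x < 0)
    (x₀ : ℝ) (hx₀pos : 0 < x₀) (hx₀zero : f x₀ = 0)
    (hx₀first : ∀ y, 0 < y → y < x₀ → f y ≠ 0)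
    (I : Set ℝ) (hI : I.OrdConnected)
    (φ : ℝ → ℝ) (hφc : ContinuousOn φ I)
    (hφineq : ∀ t ∈ I, φ t ≤ a + b * φ t ^ p)
    (t₀ : ℝ) (ht₀ : t₀ ∈ I) (hφt₀ : φ t₀ ≤ x₀) :
    ∀ t ∈ I, φ t ≤ x₀ := by
  have hfeq : f = fun x ↦ a - x + b * x ^ p := funext hf
  have hconv : ConvexOn ℝ (Ici 0) f := hfeq ▸ convexOn_sub_add_mul_rpow a hb.le hp.le
  have hcont : Continuous f := hfeq ▸ continuous_sub_add_mul_rpow a b (by linarith)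
  have hf0 : 0 < f 0 := by simpa [hf, Real.zero_rpow (by linarith : p ≠ 0)] using ha
  obtain ⟨x₁, hx₁pos, hfx₁⟩ := hneg
  have hx₀x₁ : x₀ < x₁ := by
    refine (le_of_pos_of_forall_ne_zero hx₁pos.le hcont.continuousOn hf0 hfx₁
      fun y hy ↦ hx₀first y hy.1 hy.2).lt_of_ne ?_
    rintro rfl
    linarith
  have hf_neg : ∀ y ∈ Ioc x₀ x₁, f y < 0 := fun y hy ↦ by
    simpa [hx₀zero] using hconv.lt_left_of_mem_Ioc hx₀pos.le hx₁pos.le (by linarith) hy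
  refine hI.isPreconnected.forall_le_of_forall_notMem_Ioc hφc hx₀x₁ (fun t ht hφt ↦ ?_) ht₀ hφt₀
  linarith [hf_neg _ hφt, hφineq t ht, hf (φ t)]

/-- Cazenave, Lemma 7.7.4: a bootstrap/continuity lemma. -/
theorem stmt_0 (a b p : ℝ) (ha : 0 < a) (hb : 0 < b) (hp : 1 < p)
    (f : ℝ → ℝ) (hf : ∀ x, f x = a - x + b * x ^ p)
    (hneg : ∃ x > 0, f x < 0)
    (x₀ : ℝ) (hx₀pos : 0 < x₀) (hx₀zero : f x₀ = 0)
    (hx₀first : ∀ y, 0 < y → y < x₀ → f y ≠ 0)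
    (I : Set ℝ) (hI : I.OrdConnected)
    (φ : ℝ → ℝ) (hφc : ContinuousOn φ I) (hφpos : ∀ t ∈ I, 0 ≤ φ t)
    (hφineq : ∀ t ∈ I, φ t ≤ a + b * φ t ^ p)
    (t₀ : ℝ) (ht₀ : t₀ ∈ I) (hφt₀ : φ t₀ ≤ x₀) :
    ∀ t ∈ I, φ t ≤ x₀ :=
  stmt_0_general a b p ha hb hp f hf hneg x₀ hx₀pos hx₀zero hx₀first I hI φ hφc hφineq t₀ ht₀ hφt₀
end

section
/- Let $\lambda, \omega, \sigma > 0$ and $\zeta = -1$. Then the equation $\omega\varphi - \lambda\varphi'' = \zeta D^\beta(|\varphi|^{2\sigma}\varphi)$ has no nontrivial solution $\varphi$ in the class of Schwartz functions: if $\varphi$ is a Schwartz solution then $\varphi \equiv 0$. -/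
open MeasureTheory

/-- Fourier multiplier with symbol `|ξ|^γ`. -/
noncomputable def Dop (γ : ℝ) (f : ℝ → ℂ) : ℝ → ℂ :=
  fun x => FourierTransformInv.fourierInv
    (fun ξ : ℝ => ((|ξ| ^ γ : ℝ) : ℂ) * FourierTransform.fourier f ξ) x

/-- squared L² norm -/
noncomputable def L2sq (f : ℝ → ℂ) : ℝ := ∫ x : ℝ, ‖f x‖ ^ 2

/-- the quantity `∫ |f|^q` (the `L^q` norm raised to the power `q`) -/
noncomputable def Lpow (q : ℝ) (f : ℝ → ℂ) : ℝ := ∫ x : ℝ, ‖f x‖ ^ q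

/-!
On the Fourier side the equation reads `(ω + 4π²λξ²) φ̂ = -|ξ|^β ĝ` with `g = |φ|^{2σ} φ`, so
`conj ĝ · φ̂ = -|ξ|^β |ĝ|² / (ω + 4π²λξ²) ≤ 0` pointwise. By Plancherel,
`∫ |φ|^{2σ+2} = ∫ conj g · φ = ∫ conj ĝ · φ̂ ≤ 0`, and a continuous function with
`∫ |φ|^{2σ+2} ≤ 0` vanishes.
-/

open Real Complex FourierTransform SchwartzMap ComplexConjugate InnerProductSpace

theorem Complex.inner_eq_of_ofReal_mul_eq_neg {m c : ℝ} (hm : m ≠ 0) {z w : ℂ}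
    (h : m * w = -(c * z)) : ⟪z, w⟫_ℂ = ((-(c / m * ‖z‖ ^ 2) : ℝ) : ℂ) := by
  have hm' : (m : ℂ) ≠ 0 := ofReal_ne_zero.2 hm
  have hw : w = -(c / m : ℂ) * z := by field_simp; linear_combination h
  rw [hw, RCLike.inner_apply]
  push_cast
  linear_combination (-(c / m : ℂ)) * conj_mul' z

theorem Complex.inner_ofReal_rpow_norm_mul_self (z : ℂ) {p : ℝ} (hp : 0 ≤ p) :
    ⟪((‖z‖ ^ p : ℝ) : ℂ) * z, z⟫_ℂ = ((‖z‖ ^ (p + 2) : ℝ) : ℂ) := by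
  rw [RCLike.inner_apply, map_mul, conj_ofReal, mul_left_comm, mul_conj',
    show p + 2 = p + ((2 : ℕ) : ℝ) by norm_num, rpow_add_natCast' (norm_nonneg _) (by positivity)]
  push_cast
  ring

section FourierInversion

variable {V E : Type*} [NormedAddCommGroup V] [InnerProductSpace ℝ V] [FiniteDimensional ℝ V]
  [MeasurableSpace V] [BorelSpace V] [NormedAddCommGroup E] [NormedSpace ℂ E]

theorem Real.fourierInv_eq_zero_of_not_integrable {f : V → E} (hf : ¬Integrable f) :
    𝓕⁻ f = 0 := by
  ext w
  rw [Real.fourierInv_eq_fourier_neg, Real.fourier_eq]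
  exact integral_undef (mt (Real.fourierIntegral_convergent_iff _).1 hf)

theorem MeasureTheory.Integrable.fourier_fourierInv_eq_of_integrable_fourierInv [CompleteSpace E]
    {f : V → E} (hf : Integrable f) (h'f : Integrable (𝓕⁻ f)) {v : V} (hv : ContinuousAt f v) :
    𝓕 (𝓕⁻ f) v = f v := by
  refine hf.fourier_fourierInv_eq ?_ hv
  have : 𝓕 f = fun w => 𝓕⁻ f (-w) := by ext w; simp [Real.fourierInv_eq_fourier_neg]
  rw [this]
  exact h'f.comp_neg

theorem SchwartzMap.integral_inner_fourier_fourier_of_integrable {H : Type*}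
    [NormedAddCommGroup H] [InnerProductSpace ℂ H] [CompleteSpace H] {g : V → H}
    (hg : Integrable g) (φ : 𝓢(V, H)) :
    ∫ ξ, ⟪𝓕 g ξ, 𝓕 φ ξ⟫_ℂ = ∫ x, ⟪g x, φ x⟫_ℂ := by
  have h := VectorFourier.integral_sesq_fourierIntegral_eq_neg_flip (innerSL ℂ)
    (L := innerₗ V) continuous_fourierChar continuous_inner hg ((𝓕 φ).integrable (μ := volume))
  have hinv :
      VectorFourier.fourierIntegral 𝐞 volume (-innerₗ V) ((𝓕 φ : 𝓢(V, H)) : V → H) = φ := by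
    change 𝓕⁻ ((𝓕 φ : 𝓢(V, H)) : V → H) = φ
    rw [← fourierInv_coe, fourierInv_fourier_eq]
  simp only [coe_innerSL_apply, flip_innerₗ, hinv] at h
  exact h

end FourierInversion

section Lebesgue

variable {V F : Type*} [NormedAddCommGroup V] [InnerProductSpace ℝ V] [FiniteDimensional ℝ V]
  [MeasurableSpace V] [BorelSpace V] [NormedAddCommGroup F] [NormedSpace ℝ F]

theorem SchwartzMap.integrable_norm_rpow (f : 𝓢(V, F)) {p : ℝ} (hp : 0 < p) :
    Integrable fun x => ‖f x‖ ^ p := by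
  simpa [hp.le] using (f.memLp (ENNReal.ofReal p)).integrable_norm_rpow (by simpa using hp)
    ENNReal.ofReal_ne_top

theorem SchwartzMap.eq_zero_of_integral_norm_rpow_nonpos (f : 𝓢(V, F)) {p : ℝ} (hp : 0 < p)
    (h : ∫ x, ‖f x‖ ^ p ≤ 0) : f = 0 := by
  have hcont : Continuous fun x => ‖f x‖ ^ p :=
    f.continuous.norm.rpow_const fun _ => Or.inr hp.le
  have hae : (fun x => ‖f x‖ ^ p) =ᵐ[volume] 0 :=
    (integral_eq_zero_iff_of_nonneg (fun x => by positivity) (f.integrable_norm_rpow hp)).1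
      (le_antisymm h (integral_nonneg fun x => by positivity))
  ext x
  have hx : ‖f x‖ ^ p = 0 := congrFun ((hcont.ae_eq_iff_eq volume continuous_const).1 hae) x
  exact norm_eq_zero.1 ((rpow_eq_zero (norm_nonneg _) hp.ne').1 hx)

theorem SchwartzMap.integrable_rpow_norm_mul (f : 𝓢(V, ℂ)) {p : ℝ} (hp : 0 ≤ p) :
    Integrable fun x => ((‖f x‖ ^ p : ℝ) : ℂ) * f x := by
  refine (f.integrable_norm_rpow (p := p + 1) (by positivity)).mono' ?_ (ae_of_all _ fun x => ?_)
  · exact ((continuous_ofReal.comp (f.continuous.norm.rpow_const fun _ => Or.inr hp)).mul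
      f.continuous).aestronglyMeasurable
  · rw [norm_mul, norm_real, Real.norm_of_nonneg (by positivity),
      rpow_add_one' (norm_nonneg _) (by positivity)]

end Lebesgue

namespace SchwartzMap

noncomputable def modHelmholtz (ω lam : ℝ) (φ : 𝓢(ℝ, ℂ)) : 𝓢(ℝ, ℂ) :=
  (ω : ℂ) • φ - (lam : ℂ) • derivCLM ℂ ℂ (derivCLM ℂ ℂ φ)

theorem modHelmholtz_apply (ω lam : ℝ) (φ : 𝓢(ℝ, ℂ)) (x : ℝ) :
    modHelmholtz ω lam φ x = ω * φ x - lam * deriv (deriv φ) x := by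
  have : deriv (⇑φ) = ⇑(derivCLM ℂ ℂ φ) := funext fun x => (derivCLM_apply ℂ φ x).symm
  simp [modHelmholtz, this]

theorem fourier_derivCLM_apply (φ : 𝓢(ℝ, ℂ)) (ξ : ℝ) :
    𝓕 (derivCLM ℂ ℂ φ) ξ = 2 * π * I * ξ * 𝓕 φ ξ := by
  have h : ⇑(derivCLM ℂ ℂ φ) = deriv φ := funext (derivCLM_apply ℂ φ)
  rw [fourier_coe, h, Real.fourier_deriv φ.integrable φ.differentiable
    (h ▸ (derivCLM ℂ ℂ φ).integrable)]
  rfl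

theorem fourier_modHelmholtz_apply (ω lam : ℝ) (φ : 𝓢(ℝ, ℂ)) (ξ : ℝ) :
    𝓕 (modHelmholtz ω lam φ) ξ = ((ω + lam * (2 * π * ξ) ^ 2 : ℝ) : ℂ) * 𝓕 φ ξ := by
  simp only [modHelmholtz, sub_eq_add_neg, FourierTransform.fourier_add,
    FourierTransform.fourier_neg, FourierTransform.fourier_smul, add_apply, neg_apply, smul_apply,
    smul_eq_mul, fourier_derivCLM_apply]
  push_cast
  linear_combination (-(lam : ℂ) * (2 * π * ξ) ^ 2 * 𝓕 φ ξ) * I_sq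

theorem eq_zero_of_modHelmholtz_eq_zero {ω lam : ℝ} (hω : 0 < ω) (hlam : 0 ≤ lam)
    {φ : 𝓢(ℝ, ℂ)} (hφ : modHelmholtz ω lam φ = 0) : φ = 0 := by
  suffices 𝓕 φ = 0 by rw [← fourierInv_fourier_eq (F := 𝓢(ℝ, ℂ)) φ, this, fourierInv_zero]
  ext ξ
  have hm : ((ω + lam * (2 * π * ξ) ^ 2 : ℝ) : ℂ) ≠ 0 := ofReal_ne_zero.2 (by positivity)
  have h := fourier_modHelmholtz_apply ω lam φ ξ
  rw [hφ, FourierTransform.fourier_zero, zero_apply, eq_comm, mul_eq_zero] at h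
  exact h.resolve_left hm

theorem fourier_mul_eq_neg_of_modHelmholtz_eq_neg_fourierInv {ω lam : ℝ} {φ : 𝓢(ℝ, ℂ)}
    {h : ℝ → ℂ} (hh : Integrable h) (hφ : ⇑(modHelmholtz ω lam φ) = -𝓕⁻ h) {ξ : ℝ}
    (hξ : ContinuousAt h ξ) :
    ((ω + lam * (2 * π * ξ) ^ 2 : ℝ) : ℂ) * 𝓕 φ ξ = -h ξ := by
  have hinv : 𝓕⁻ h = ⇑(-modHelmholtz ω lam φ) := by ext x; simp [hφ]
  have hint : Integrable (𝓕⁻ h) := hinv ▸ (-modHelmholtz ω lam φ).integrable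
  rw [← fourier_modHelmholtz_apply, ← hh.fourier_fourierInv_eq_of_integrable_fourierInv hint hξ,
    hinv, ← fourier_coe, FourierTransform.fourier_neg, neg_apply, neg_neg]

theorem re_integral_inner_nonpos_of_modHelmholtz_eq_neg_fourierMultiplier {ω lam : ℝ}
    (hω : 0 < ω) (hlam : 0 ≤ lam) {a : ℝ → ℝ} (ha : ∀ ξ, 0 ≤ a ξ)
    (ha_cont : ∀ᵐ ξ, ContinuousAt a ξ) {g : ℝ → ℂ} (hg : Integrable g) {φ : 𝓢(ℝ, ℂ)}
    (hφ : ⇑(modHelmholtz ω lam φ) = -𝓕⁻ (fun ξ => (a ξ : ℂ) * 𝓕 g ξ)) :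
    (∫ x, ⟪g x, φ x⟫_ℂ).re ≤ 0 := by
  by_cases hint : Integrable (fun ξ => (a ξ : ℂ) * 𝓕 g ξ)
  swap
  -- `𝓕⁻` of a non-integrable function is `0`, so then `φ` solves the homogeneous equation.
  · rw [Real.fourierInv_eq_zero_of_not_integrable hint, neg_zero] at hφ
    simp [eq_zero_of_modHelmholtz_eq_zero hω hlam (DFunLike.coe_injective hφ)]
  have hG : Continuous (𝓕 g) :=
    VectorFourier.fourierIntegral_continuous continuous_fourierChar continuous_inner hg
  have hpointwise : ∀ᵐ ξ, ⟪𝓕 g ξ, 𝓕 φ ξ⟫_ℂ =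
      ((-(a ξ / (ω + lam * (2 * π * ξ) ^ 2) * ‖𝓕 g ξ‖ ^ 2) : ℝ) : ℂ) := by
    filter_upwards [ha_cont] with ξ hξ
    have hm : 0 < ω + lam * (2 * π * ξ) ^ 2 := by positivity
    exact Complex.inner_eq_of_ofReal_mul_eq_neg hm.ne'
      (fourier_mul_eq_neg_of_modHelmholtz_eq_neg_fourierInv hint hφ
        ((continuous_ofReal.continuousAt.comp hξ).mul hG.continuousAt))
  rw [← integral_inner_fourier_fourier_of_integrable hg, integral_congr_ae hpointwise,
    integral_complex_ofReal, ofReal_re]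
  exact integral_nonpos fun ξ => neg_nonpos.2 (by have := ha ξ; positivity)

end SchwartzMap

/-- In the defocusing case `ζ = -1`, the standing-wave equation
`ω φ - λ φ'' = -D^β(|φ|^(2σ) φ)` has no nontrivial Schwartz solution. -/
theorem stmt_4 (lam ω σ β : ℝ) (hlam : 0 < lam) (hω : 0 < ω) (hσ : 0 < σ)
    (φ : SchwartzMap ℝ ℂ)
    (hφ : ∀ x : ℝ, (ω : ℂ) * φ x - (lam : ℂ) * deriv (deriv ⇑φ) x =
      -Dop β (fun y => ((‖φ y‖ ^ (2 * σ) : ℝ) : ℂ) * φ y) x) :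
    ∀ x, φ x = 0 := by
  have hsymbol : ∀ᵐ ξ : ℝ, ContinuousAt (fun ξ : ℝ => |ξ| ^ β) ξ :=
    (Measure.ae_ne volume 0).mono fun ξ hξ =>
      (continuousAt_rpow_const _ _ (Or.inl (abs_ne_zero.2 hξ))).comp continuous_abs.continuousAt
  have hsign := re_integral_inner_nonpos_of_modHelmholtz_eq_neg_fourierMultiplier hω hlam.le
    (fun ξ => by positivity) hsymbol (φ.integrable_rpow_norm_mul (by positivity : 0 ≤ 2 * σ))
    (funext fun x => (modHelmholtz_apply ω lam φ x).trans (hφ x))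
  simp_rw [Complex.inner_ofReal_rpow_norm_mul_self _ (by positivity : 0 ≤ 2 * σ),
    integral_complex_ofReal, ofReal_re] at hsign
  simp [φ.eq_zero_of_integral_norm_rpow_nonpos (by positivity) hsign]
end
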